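/- Let n ≥ 2 and let P = [n−1] ⊔ [n−1] be the disjoint union of two (n−1)-element chains. Then the reverse operator 𝔛 acting on the lower sets of P has exactly n orbits, and each orbit has exactly n elements. -/

import Mathlib

/-- The reverse operator `𝔛` on lower sets of a poset: the lower set generated by
the minimal elements of the complement. -/
def XRev {α : Type*} [PartialOrder α] (I : Set α) : Set α :=
  {x | ∃ y, Minimal (fun z => z ∈ Iᶜ) y ∧ x ≤ y}

/-- The `𝔛`-orbit of a lower set `I` of a finite poset (forward iteration; since
`𝔛` is a bijection on lower sets of a finite poset, this is the full orbit). -/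
def XOrbit {α : Type*} [PartialOrder α] (I : Set α) : Set (Set α) :=
  {J | ∃ k : ℕ, XRev^[k] I = J}

/-!
A lower set of `[m] ⊔ [m]` is a pair of initial segments, of lengths `(a, b)` with
`a, b ∈ {0, …, m}`. `𝔛` acts on each chain separately, and on a chain it lengthens the
initial segment by one, except that the whole chain goes to `∅`; so it is `c ↦ c + 1` in
`ℤ/(m+1)`. Hence `𝔛` is translation by `(1, 1)` on `(ℤ/(m+1))²`: every orbit has `m + 1`
elements, and the orbits are classified by `b - a`, giving `m + 1` of them.
-/

theorem Sum.minimal_inl_iff {α β : Type*} [LE α] [LE β] {P : α ⊕ β → Prop} {a : α} :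
    Minimal P (Sum.inl a) ↔ Minimal (P ∘ Sum.inl) a := by
  simp [Minimal]

theorem Sum.minimal_inr_iff {α β : Type*} [LE α] [LE β] {P : α ⊕ β → Prop} {b : β} :
    Minimal P (Sum.inr b) ↔ Minimal (P ∘ Sum.inr) b := by
  simp [Minimal]

section

variable {α β : Type*} [PartialOrder α] [PartialOrder β]

theorem XRev_univ : XRev (Set.univ : Set α) = ∅ := by
  simp [XRev, Minimal]

theorem preimage_inl_XRev (I : Set (α ⊕ β)) :
    Sum.inl ⁻¹' XRev I = XRev (Sum.inl ⁻¹' I) := by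
  ext a
  simp only [XRev, Set.mem_preimage, Set.mem_ofPred_eq, Sum.exists, Sum.minimal_inl_iff,
    Sum.inl_le_inl_iff, Sum.not_inl_le_inr, and_false, exists_false, or_false]
  rfl

theorem preimage_inr_XRev (I : Set (α ⊕ β)) :
    Sum.inr ⁻¹' XRev I = XRev (Sum.inr ⁻¹' I) := by
  ext b
  simp only [XRev, Set.mem_preimage, Set.mem_ofPred_eq, Sum.exists, Sum.minimal_inr_iff,
    Sum.inr_le_inr_iff, Sum.not_inr_le_inl, and_false, exists_false, false_or]
  rfl

theorem XRev_semiconj_sumEquiv :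
    Function.Semiconj (Set.sumEquiv (α := α) (β := β)) XRev (Prod.map XRev XRev) :=
  fun I => Prod.ext (preimage_inl_XRev I) (preimage_inr_XRev I)

end

def chainPrefix (m : ℕ) (c : Fin (m + 1)) : Set (Fin m) :=
  {x | (x : ℕ) < c}

theorem mem_chainPrefix {m : ℕ} {c : Fin (m + 1)} {x : Fin m} :
    x ∈ chainPrefix m c ↔ (x : ℕ) < c :=
  Iff.rfl

theorem isLowerSet_chainPrefix (m : ℕ) (c : Fin (m + 1)) : IsLowerSet (chainPrefix m c) :=
  fun _ _ hle hx => lt_of_le_of_lt (Fin.le_def.mp hle) hx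

theorem chainPrefix_injective (m : ℕ) : Function.Injective (chainPrefix m) := by
  intro c d h
  by_contra hne
  wlog hlt : c < d generalizing c d
  · exact this h.symm (Ne.symm hne) (lt_of_le_of_ne (not_lt.mp hlt) (Ne.symm hne))
  have hc : (c : ℕ) < m := lt_of_lt_of_le hlt (Nat.le_of_lt_succ d.isLt)
  have hmem : (⟨c, hc⟩ : Fin m) ∈ chainPrefix m d := hlt
  rw [← h, mem_chainPrefix] at hmem
  exact lt_irrefl _ hmem

theorem exists_eq_chainPrefix {m : ℕ} {T : Set (Fin m)} (hT : IsLowerSet T) :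
    ∃ c, T = chainPrefix m c := by
  rcases T.eq_empty_or_nonempty with rfl | hne
  · exact ⟨0, by ext x; simp [chainPrefix]⟩
  obtain ⟨x, hmax⟩ := T.toFinite.exists_maximal hne
  refine ⟨x.succ, Set.ext fun y => ⟨fun hy => ?_, fun hy => hT ?_ hmax.prop⟩⟩
  · exact Nat.lt_succ_of_le ((le_total x y).elim (hmax.le_of_ge hy) id)
  · exact Fin.le_def.mpr (Nat.le_of_lt_succ hy)

theorem XRev_chainPrefix (m : ℕ) :
    Function.Semiconj (chainPrefix m) (· + 1) XRev := by
  intro c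
  induction c using Fin.lastCases with
  | last =>
    have huniv : chainPrefix m (Fin.last m) = Set.univ := Set.eq_univ_of_forall fun x => x.isLt
    rw [huniv, XRev_univ]
    show chainPrefix m (Fin.last m + 1) = ∅
    rw [Fin.last_add_one]
    exact Set.eq_empty_of_forall_notMem fun x => Nat.not_lt_zero x
  | cast i =>
    have hmin : ∀ y, Minimal (· ∈ (chainPrefix m i.castSucc)ᶜ) y ↔ y = i := fun y =>
      minimal_iff_eq (lt_irrefl (i : ℕ)) fun x hx => Fin.le_def.mpr (not_lt.mp hx)
    ext x
    simp only [XRev, hmin, exists_eq_left, Fin.coeSucc_eq_succ, Set.mem_ofPred_eq, mem_chainPrefix,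
      Fin.val_succ, Nat.lt_succ_iff, Fin.le_def]

theorem isLowerSet_sumEquiv_symm {α β : Type*} [LE α] [LE β] {A : Set α} {B : Set β}
    (hA : IsLowerSet A) (hB : IsLowerSet B) : IsLowerSet (Set.sumEquiv.symm (A, B)) := by
  rintro (x | x) (y | y) hle hy <;> simp_all [Set.sumEquiv_symm_apply]
  · exact hA hle hy
  · exact hB hle hy

def prefixPair (m : ℕ) (a b : Fin (m + 1)) : Set (Fin m ⊕ Fin m) :=
  Set.sumEquiv.symm (chainPrefix m a, chainPrefix m b)

theorem isLowerSet_prefixPair (m : ℕ) (a b : Fin (m + 1)) : IsLowerSet (prefixPair m a b) :=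
  isLowerSet_sumEquiv_symm (isLowerSet_chainPrefix m a) (isLowerSet_chainPrefix m b)

theorem exists_eq_prefixPair {m : ℕ} {I : Set (Fin m ⊕ Fin m)} (hI : IsLowerSet I) :
    ∃ a b, I = prefixPair m a b := by
  obtain ⟨a, ha⟩ := exists_eq_chainPrefix (hI.preimage Sum.inl_mono)
  obtain ⟨b, hb⟩ := exists_eq_chainPrefix (hI.preimage Sum.inr_mono)
  refine ⟨a, b, ?_⟩
  rw [prefixPair, ← ha, ← hb]
  exact (Set.sumEquiv.symm_apply_apply I).symm

theorem prefixPair_inj {m : ℕ} {a b a' b' : Fin (m + 1)} :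
    prefixPair m a b = prefixPair m a' b' ↔ a = a' ∧ b = b' := by
  simp only [prefixPair, Set.sumEquiv.symm.injective.eq_iff, Prod.mk.injEq,
    (chainPrefix_injective m).eq_iff]

theorem XRev_prefixPair (m : ℕ) (a b : Fin (m + 1)) :
    XRev (prefixPair m a b) = prefixPair m (a + 1) (b + 1) := by
  apply Set.sumEquiv.injective
  rw [XRev_semiconj_sumEquiv, prefixPair, prefixPair, OrderIso.apply_symm_apply,
    OrderIso.apply_symm_apply, Prod.map_apply, XRev_chainPrefix, XRev_chainPrefix]

theorem XRev_iterate_prefixPair (m : ℕ) (a b : Fin (m + 1)) (k : ℕ) :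
    XRev^[k] (prefixPair m a b) = prefixPair m (a + k • 1) (b + k • 1) := by
  induction k with
  | zero => simp
  | succ k ih =>
    rw [Function.iterate_succ_apply', ih, XRev_prefixPair, succ_nsmul, add_assoc, add_assoc]

theorem XOrbit_prefixPair (m : ℕ) (a b : Fin (m + 1)) :
    XOrbit (prefixPair m a b) = Set.range fun k : Fin (m + 1) => prefixPair m (a + k) (b + k) := by
  ext J
  constructor
  · rintro ⟨k, rfl⟩
    exact ⟨k • 1, (XRev_iterate_prefixPair m a b k).symm⟩
  · rintro ⟨k, rfl⟩
    have hk : (k : ℕ) • (1 : Fin (m + 1)) = k := by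
      open Fin.NatCast in rw [nsmul_one, Fin.cast_val_eq_self]
    exact ⟨k, by rw [XRev_iterate_prefixPair, hk]⟩

theorem ncard_XOrbit_prefixPair (m : ℕ) (a b : Fin (m + 1)) :
    (XOrbit (prefixPair m a b)).ncard = m + 1 := by
  have hinj : Function.Injective fun k : Fin (m + 1) => prefixPair m (a + k) (b + k) :=
    fun k k' h => add_left_cancel (prefixPair_inj.mp h).1
  rw [XOrbit_prefixPair, Set.ncard_range_of_injective hinj, Nat.card_eq_fintype_card,
    Fintype.card_fin]

theorem XOrbit_prefixPair_eq_sub (m : ℕ) (a b : Fin (m + 1)) :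
    XOrbit (prefixPair m a b) = XOrbit (prefixPair m 0 (b - a)) := by
  rw [XOrbit_prefixPair, XOrbit_prefixPair,
    ← (Equiv.addLeft a).surjective.range_comp fun k => prefixPair m (0 + k) (b - a + k)]
  congr 1
  ext1 k
  simp only [Function.comp_apply, Equiv.coe_addLeft]
  congr 1 <;> abel

theorem setOf_XOrbit_eq_range (m : ℕ) :
    {O : Set (Set (Fin m ⊕ Fin m)) | ∃ I, IsLowerSet I ∧ O = XOrbit I} =
      Set.range fun d : Fin (m + 1) => XOrbit (prefixPair m 0 d) := by
  ext O
  constructor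
  · rintro ⟨I, hI, rfl⟩
    obtain ⟨a, b, rfl⟩ := exists_eq_prefixPair hI
    exact ⟨b - a, (XOrbit_prefixPair_eq_sub m a b).symm⟩
  · rintro ⟨d, rfl⟩
    exact ⟨prefixPair m 0 d, isLowerSet_prefixPair m 0 d, rfl⟩

theorem XOrbit_prefixPair_zero_injective (m : ℕ) :
    Function.Injective fun d : Fin (m + 1) => XOrbit (prefixPair m 0 d) := by
  intro d d' (h : XOrbit (prefixPair m 0 d) = XOrbit (prefixPair m 0 d'))
  have hmem : prefixPair m 0 d ∈ XOrbit (prefixPair m 0 d') := h ▸ ⟨0, rfl⟩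
  rw [XOrbit_prefixPair] at hmem
  obtain ⟨k, hk⟩ := hmem
  obtain ⟨hk0, hd⟩ := prefixPair_inj.mp hk
  rw [zero_add] at hk0
  rw [← hd, hk0, add_zero]

theorem ncard_setOf_XOrbit (m : ℕ) :
    {O : Set (Set (Fin m ⊕ Fin m)) | ∃ I, IsLowerSet I ∧ O = XOrbit I}.ncard = m + 1 := by
  rw [setOf_XOrbit_eq_range, Set.ncard_range_of_injective (XOrbit_prefixPair_zero_injective m),
    Nat.card_eq_fintype_card, Fintype.card_fin]

theorem stmt5 (n : ℕ) (hn : 2 ≤ n) :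
    Set.ncard {O : Set (Set (Fin (n - 1) ⊕ Fin (n - 1))) |
        ∃ I : Set (Fin (n - 1) ⊕ Fin (n - 1)), IsLowerSet I ∧ O = XOrbit I} = n ∧
      ∀ I : Set (Fin (n - 1) ⊕ Fin (n - 1)), IsLowerSet I →
        (XOrbit I).ncard = n := by
  obtain ⟨m, rfl⟩ : ∃ m, n = m + 1 := ⟨n - 1, by omega⟩
  refine ⟨ncard_setOf_XOrbit m, fun I hI => ?_⟩
  obtain ⟨a, b, rfl⟩ := exists_eq_prefixPair hI
  exact ncard_XOrbit_prefixPair m a b
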